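/- Let G_1, …, G_t be graphs on a common vertex set, G_∩ their intersection, C a clique in G_∩, and C' ⊆ C a vertex-maximal usually-avg-c-isolated set (no proper superset C'' with C' ⊂ C'' ⊆ C satisfies Σ_{i=1}^t Σ_{v∈C''} outdeg_{G_i}(v, C'') < c·|C''|·t, while C' itself satisfies this). Then C' contains every vertex v ∈ C with Σ_{i=1}^t deg_{G_i}(v) ≤ t·(δ_{G_∩}(C) + |C'| + 1). -/

import Mathlib

/-!
Suppose `v ∈ C \ C'` and put `C'' = insert v C'`. Since `C` is a clique in every layer, `v` is
adjacent to all of `C'`, so passing from `C'` to `C''` changes the total outdegree by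
`∑ᵢ deg_{Gᵢ} v - 2 t |C'|`. On the other hand every `u ∈ C'` has at least `δ + 1 - |C'|`
neighbours outside `C'` in each layer, so the isolation of `C'` forces `δ + 1 < |C'| + c`.
Together with the degree bound on `v` this makes `C''` usually-avg-`c`-isolated, against the
maximality of `C'`.
-/

open Finset
open scoped Classical

variable {V : Type*} [Fintype V] [DecidableEq V]

/-- Number of neighbors of `v` in `G` lying outside `A`. -/
noncomputable def outdeg (G : SimpleGraph V) (v : V) (A : Finset V) : ℕ :=
  (Finset.univ.filter fun u => G.Adj v u ∧ u ∉ A).card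

/-- Degree of `v` in `G`. -/
noncomputable def deg (G : SimpleGraph V) (v : V) : ℕ :=
  (Finset.univ.filter fun u => G.Adj v u).card

/-- Minimum degree over the vertices of a nonempty set `C`. -/
noncomputable def minDeg (G : SimpleGraph V) (C : Finset V) (hC : C.Nonempty) : ℕ :=
  C.inf' hC fun v => deg G v

/-- Edge-wise intersection of the layers `G a, …, G b`. -/
def interGraph (G : ℕ → SimpleGraph V) (a b : ℕ) : SimpleGraph V where
  Adj u v := u ≠ v ∧ ∀ i ∈ Finset.Icc a b, (G i).Adj u v
  symm := ⟨fun u v h => ⟨h.1.symm, fun i hi => (h.2 i hi).symm⟩⟩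
  loopless := ⟨fun v h => h.1 rfl⟩

/-- Edge-wise union of the layers `G a, …, G b`. -/
def unionGraph (G : ℕ → SimpleGraph V) (a b : ℕ) : SimpleGraph V where
  Adj u v := ∃ i ∈ Finset.Icc a b, (G i).Adj u v
  symm := ⟨fun u v h => ⟨h.choose, h.choose_spec.1, h.choose_spec.2.symm⟩⟩
  loopless := ⟨fun v h => (G h.choose).irrefl h.choose_spec.2⟩
/-- `S` is usually-avg-`c`-isolated over the layers `G 1, …, G t`. -/
def UsuallyAvgIsolated (G : ℕ → SimpleGraph V) (t : ℕ) (c : ℚ) (S : Finset V) : Prop :=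
  (∑ i ∈ Finset.Icc 1 t, ∑ v ∈ S, (outdeg (G i) v S : ℚ)) < c * S.card * t


section Outdeg

variable (G : SimpleGraph V)

theorem deg_eq_outdeg_add_card_filter_adj (v : V) (A : Finset V) :
    deg G v = outdeg G v A + #(A.filter (G.Adj v)) := by
  have hsplit := card_filter_add_card_filter_not (s := univ.filter fun u => G.Adj v u) (· ∈ A)
  have hinside : (univ.filter fun u => G.Adj v u).filter (· ∈ A) = A.filter (G.Adj v) := by
    ext u; simp [and_comm]
  rw [hinside, filter_filter] at hsplit
  unfold deg outdeg
  omega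

theorem deg_add_one_le_outdeg_add_card {u : V} {A : Finset V} (hu : u ∈ A) :
    deg G u + 1 ≤ outdeg G u A + #A := by
  have hsub : A.filter (G.Adj u) ⊆ A.erase u := fun w hw => by
    obtain ⟨hwA, huw⟩ := mem_filter.mp hw
    exact mem_erase.mpr ⟨huw.ne.symm, hwA⟩
  have := card_le_card hsub
  rw [card_erase_of_mem hu] at this
  have := card_pos.mpr ⟨u, hu⟩
  rw [deg_eq_outdeg_add_card_filter_adj G u A]
  omega

theorem outdeg_eq_outdeg_insert_add_one {u w : V} {A : Finset V} (huw : G.Adj u w)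
    (hw : w ∉ A) : outdeg G u A = outdeg G u (insert w A) + 1 := by
  have hfilter : univ.filter (fun x => G.Adj u x ∧ x ∉ A) =
      insert w (univ.filter fun x => G.Adj u x ∧ x ∉ insert w A) := by
    ext x
    by_cases hx : x = w
    · subst hx; simp [huw, hw]
    · simp [hx]
  unfold outdeg
  rw [hfilter, card_insert_of_notMem (by simp)]

theorem outdeg_insert_self_add_card {v : V} {A : Finset V}
    (hadj : ∀ u ∈ A, G.Adj v u) : outdeg G v (insert v A) + #A = deg G v := by
  have hfilter : (insert v A).filter (G.Adj v) = A := by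
    rw [filter_insert, if_neg (G.loopless.irrefl v), filter_true_of_mem hadj]
  rw [deg_eq_outdeg_add_card_filter_adj G v (insert v A), hfilter]

/-- Each `u ∈ A` loses its outgoing edge to `v`, while `v` keeps all its edges but the `#A` into
`A` as outgoing ones. -/
theorem sum_outdeg_insert_add_two_mul_card {v : V} {A : Finset V} (hv : v ∉ A)
    (hadj : ∀ u ∈ A, G.Adj v u) :
    ∑ u ∈ insert v A, outdeg G u (insert v A) + 2 * #A =
      deg G v + ∑ u ∈ A, outdeg G u A := by
  have hA : ∑ u ∈ A, outdeg G u A = ∑ u ∈ A, outdeg G u (insert v A) + #A := by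
    rw [card_eq_sum_ones, ← sum_add_distrib]
    exact sum_congr rfl fun u hu => outdeg_eq_outdeg_insert_add_one G (hadj u hu).symm hv
  rw [sum_insert hv, hA, ← outdeg_insert_self_add_card G hadj]
  ring

theorem card_mul_le_sum_outdeg_add_card_mul_card {A : Finset V} {δ : ℕ}
    (hδ : ∀ u ∈ A, δ ≤ deg G u) :
    #A * (δ + 1) ≤ ∑ u ∈ A, outdeg G u A + #A * #A := by
  calc #A * (δ + 1) = ∑ _u ∈ A, (δ + 1) := by rw [sum_const, smul_eq_mul]
    _ ≤ ∑ u ∈ A, (outdeg G u A + #A) :=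
      sum_le_sum fun u hu => (Nat.succ_le_succ (hδ u hu)).trans
        (deg_add_one_le_outdeg_add_card G hu)
    _ = ∑ u ∈ A, outdeg G u A + #A * #A := by rw [sum_add_distrib, sum_const, smul_eq_mul]

end Outdeg

omit [DecidableEq V] in
theorem deg_interGraph_le (G : ℕ → SimpleGraph V) {a b i : ℕ} (hi : i ∈ Icc a b) (v : V) :
    deg (interGraph G a b) v ≤ deg (G i) v :=
  card_le_card fun _ hu => by
    simp only [mem_filter, mem_univ, true_and] at hu ⊢
    exact hu.2 i hi

omit [DecidableEq V] in
theorem minDeg_le_deg (G : SimpleGraph V) {C : Finset V} (hC : C.Nonempty) {v : V}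
    (hv : v ∈ C) : minDeg G C hC ≤ deg G v :=
  inf'_le _ hv

section Layers

variable (G : ℕ → SimpleGraph V) (t : ℕ)

noncomputable def layerOutdegSum (S : Finset V) : ℚ :=
  ∑ i ∈ Icc 1 t, ∑ v ∈ S, (outdeg (G i) v S : ℚ)

theorem usuallyAvgIsolated_iff {c : ℚ} {S : Finset V} :
    UsuallyAvgIsolated G t c S ↔ layerOutdegSum G t S < c * #S * t :=
  Iff.rfl

theorem layerOutdegSum_insert {v : V} {A : Finset V} (hv : v ∉ A)
    (hadj : ∀ i ∈ Icc 1 t, ∀ u ∈ A, (G i).Adj v u) :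
    layerOutdegSum G t (insert v A) + t * (2 * #A) =
      ∑ i ∈ Icc 1 t, (deg (G i) v : ℚ) + layerOutdegSum G t A := by
  have h := sum_congr rfl fun i hi => sum_outdeg_insert_add_two_mul_card (G i) hv (hadj i hi)
  simp only [sum_add_distrib, sum_const, Nat.card_Icc, add_tsub_cancel_right, smul_eq_mul] at h
  unfold layerOutdegSum
  exact_mod_cast h

theorem mul_card_mul_le_layerOutdegSum {A : Finset V} {δ : ℕ}
    (hδ : ∀ i ∈ Icc 1 t, ∀ u ∈ A, δ ≤ deg (G i) u) :
    t * (#A * (δ + 1)) ≤ layerOutdegSum G t A + t * (#A * #A) := by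
  have h := sum_le_sum fun i hi => card_mul_le_sum_outdeg_add_card_mul_card (G i) (hδ i hi)
  simp only [sum_add_distrib, sum_const, Nat.card_Icc, add_tsub_cancel_right, smul_eq_mul] at h
  unfold layerOutdegSum
  exact_mod_cast h

end Layers

theorem stmt2_general (G : ℕ → SimpleGraph V) (t : ℕ) (c : ℚ)
    (C C' : Finset V) (hC : C.Nonempty)
    (hclique : (interGraph G 1 t).IsClique (C : Set V)) (hsub : C' ⊆ C)
    (hiso : UsuallyAvgIsolated G t c C')
    (hmax : ∀ C'' : Finset V, C' ⊂ C'' → C'' ⊆ C → ¬ UsuallyAvgIsolated G t c C'') :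
    ∀ v ∈ C,
      (∑ i ∈ Finset.Icc 1 t, (deg (G i) v : ℚ)) ≤
        (t : ℚ) * ((minDeg (interGraph G 1 t) C hC : ℚ) + C'.card + 1) →
      v ∈ C' := by
  intro v hv hdeg
  by_contra hv'
  set δ := minDeg (interGraph G 1 t) C hC
  rw [usuallyAvgIsolated_iff] at hiso
  have hlow := mul_card_mul_le_layerOutdegSum G t (A := C') (δ := δ) fun i hi u hu =>
    (minDeg_le_deg _ hC (hsub hu)).trans (deg_interGraph_le G hi u)
  have hins := layerOutdegSum_insert G t hv' fun i hi u hu =>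
    (hclique hv (hsub hu) fun h => hv' (h ▸ hu)).2 i hi
  -- `hiso` and `hlow` give `t * #C' * (δ + 1 - #C' - c) < 0`, which forces `#C' > 0`.
  have hgap : (t : ℚ) * (δ + 1 - #C' - c) < 0 := by
    nlinarith [(#C').cast_nonneg (α := ℚ)]
  refine hmax _ (ssubset_insert hv') (insert_subset hv hsub) ?_
  rw [usuallyAvgIsolated_iff, card_insert_of_notMem hv', Nat.cast_add_one]
  linarith

theorem stmt2 (G : ℕ → SimpleGraph V) (t : ℕ) (ht : 1 ≤ t) (c : ℚ) (hc : 0 < c)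
    (C C' : Finset V) (hC : C.Nonempty)
    (hclique : (interGraph G 1 t).IsClique (C : Set V)) (hsub : C' ⊆ C)
    (hiso : UsuallyAvgIsolated G t c C')
    (hmax : ∀ C'' : Finset V, C' ⊂ C'' → C'' ⊆ C → ¬ UsuallyAvgIsolated G t c C'') :
    ∀ v ∈ C,
      (∑ i ∈ Finset.Icc 1 t, (deg (G i) v : ℚ)) ≤
        (t : ℚ) * ((minDeg (interGraph G 1 t) C hC : ℚ) + C'.card + 1) →
      v ∈ C' :=
  stmt2_general G t c C C' hC hclique hsub hiso hmax
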